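/- arXiv:1812.06584 — 2 statements merged into one kernel-verified Lean document; each statement's English description precedes it below -/
import Mathlib

section
/- Let ι : A → A' be a strong deformation retract of cochain complexes of modules over a ring R, witnessed by a chain map ι⁻¹ : A' → A and maps Hⁿ : Aⁿ → A^{n−1} (so that ι ∘ ι⁻¹ = id_{A'} and ι⁻¹ ∘ ι = id_A + d_A H + H d_A). Then there exist maps H'ⁿ : Aⁿ → A^{n−1} such that ι ∘ ι⁻¹ = id_{A'}, ι⁻¹ ∘ ι = id_A + d_A H' + H' d_A, and moreover the side conditions H' ∘ H' = 0, ι ∘ H' = 0, and H' ∘ ι⁻¹ = 0 hold; that is, every strong deformation retract can be replaced (keeping the same ι and ι⁻¹) by a very strong deformation retract. -/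
/-!
Statement 3: every strong deformation retract of cochain complexes of `R`-modules
can be upgraded (keeping the same `ι` and `ι⁻¹`, replacing only the homotopy `H`)
to a very strong deformation retract, i.e. one whose homotopy `H'` satisfies the
side conditions `H' ∘ H' = 0`, `ι ∘ H' = 0`, `H' ∘ ι⁻¹ = 0`.
-/

open LinearMap

/-- Auxiliary step: if the homotopy `H` already satisfies the two annihilation
conditions `ι ∘ H = 0` and `H ∘ ιinv = 0`, then `H' := -(H ∘ d ∘ H)` satisfies
all three side conditions. -/
private theorem vsdr_aux {R : Type*} [Ring R]
    (A A' : ℤ → Type*)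
    [∀ n, AddCommGroup (A n)] [∀ n, Module R (A n)]
    [∀ n, AddCommGroup (A' n)] [∀ n, Module R (A' n)]
    (dA : ∀ n : ℤ, A n →ₗ[R] A (n + 1)) (dA' : ∀ n : ℤ, A' n →ₗ[R] A' (n + 1))
    (hdA : ∀ n : ℤ, (dA (n + 1)).comp (dA n) = 0)
    (ι : ∀ n : ℤ, A n →ₗ[R] A' n) (ιinv : ∀ n : ℤ, A' n →ₗ[R] A n)
    (hι : ∀ n : ℤ, (ι (n + 1)).comp (dA n) = (dA' n).comp (ι n))
    (hιinv : ∀ n : ℤ, (ιinv (n + 1)).comp (dA' n) = (dA n).comp (ιinv n))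
    (H : ∀ n : ℤ, A (n + 1) →ₗ[R] A n)
    (hιH : ∀ n : ℤ, (ι n).comp (H n) = 0)
    (hHinv : ∀ n : ℤ, (H n).comp (ιinv (n + 1)) = 0)
    (hhomotopy : ∀ n : ℤ, (ιinv (n + 1)).comp (ι (n + 1)) =
      LinearMap.id + (dA n).comp (H n) + (H (n + 1)).comp (dA (n + 1))) :
    ∃ H' : ∀ n : ℤ, A (n + 1) →ₗ[R] A n,
      (∀ n : ℤ, (ιinv (n + 1)).comp (ι (n + 1)) =
        LinearMap.id + (dA n).comp (H' n) + (H' (n + 1)).comp (dA (n + 1))) ∧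
      (∀ n : ℤ, (H' n).comp (H' (n + 1)) = 0) ∧
      (∀ n : ℤ, (ι n).comp (H' n) = 0) ∧
      (∀ n : ℤ, (H' n).comp (ιinv (n + 1)) = 0) := by
  -- notation: e n = ιinv n ∘ ι n, P n = dA n ∘ H n, S n = H n ∘ dA n
  have hchain : ∀ n : ℤ, ((ιinv (n + 1)).comp (ι (n + 1))).comp (dA n)
      = (dA n).comp ((ιinv n).comp (ι n)) := by
    intro n
    rw [LinearMap.comp_assoc, hι n, ← LinearMap.comp_assoc, hιinv n, LinearMap.comp_assoc]
  have heH : ∀ n : ℤ, ((ιinv n).comp (ι n)).comp (H n) = 0 := by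
    intro n
    rw [LinearMap.comp_assoc, hιH n, LinearMap.comp_zero]
  have hHe : ∀ n : ℤ, (H n).comp ((ιinv (n + 1)).comp (ι (n + 1))) = 0 := by
    intro n
    rw [← LinearMap.comp_assoc, hHinv n, LinearMap.zero_comp]
  have hT : ∀ n : ℤ, (dA n).comp (H n) + (H (n + 1)).comp (dA (n + 1))
      = (ιinv (n + 1)).comp (ι (n + 1)) - LinearMap.id := by
    intro n; rw [hhomotopy n]; abel
  have hPe : ∀ n : ℤ, ((dA n).comp (H n)).comp ((ιinv (n + 1)).comp (ι (n + 1))) = 0 := by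
    intro n
    rw [LinearMap.comp_assoc, hHe n, LinearMap.comp_zero]
  have heP : ∀ n : ℤ, ((ιinv (n + 1)).comp (ι (n + 1))).comp ((dA n).comp (H n)) = 0 := by
    intro n
    rw [← LinearMap.comp_assoc, hchain n, LinearMap.comp_assoc, heH n, LinearMap.comp_zero]
  have hSP : ∀ n : ℤ, ((H (n + 1)).comp (dA (n + 1))).comp ((dA n).comp (H n)) = 0 := by
    intro n
    rw [LinearMap.comp_assoc, ← LinearMap.comp_assoc (H n) (dA n) (dA (n + 1)), hdA n,
      LinearMap.zero_comp, LinearMap.comp_zero]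
  have hPP : ∀ n : ℤ, ((dA n).comp (H n)).comp ((dA n).comp (H n)) = -((dA n).comp (H n)) := by
    intro n
    have h1 : (dA n).comp (H n) = ((ιinv (n + 1)).comp (ι (n + 1)) - LinearMap.id)
        - (H (n + 1)).comp (dA (n + 1)) := by rw [← hT n]; abel
    nth_rewrite 1 [h1]
    rw [LinearMap.sub_comp, LinearMap.sub_comp, LinearMap.id_comp, heP n, hSP n]
    abel
  have hSS : ∀ n : ℤ, ((H (n + 1)).comp (dA (n + 1))).comp ((H (n + 1)).comp (dA (n + 1)))
      = -((H (n + 1)).comp (dA (n + 1))) := by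
    intro n
    have hSe : ((H (n + 1)).comp (dA (n + 1))).comp ((ιinv (n + 1)).comp (ι (n + 1))) = 0 := by
      rw [LinearMap.comp_assoc, ← hchain (n + 1), ← LinearMap.comp_assoc, hHe (n + 1),
        LinearMap.zero_comp]
    have h1 : (H (n + 1)).comp (dA (n + 1)) = ((ιinv (n + 1)).comp (ι (n + 1)) - LinearMap.id)
        - (dA n).comp (H n) := by rw [← hT n]; abel
    nth_rewrite 2 [h1]
    rw [LinearMap.comp_sub, LinearMap.comp_sub, LinearMap.comp_id, hSe, hSP n]
    abel
  -- the new homotopy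
  refine ⟨fun n => -((H n).comp ((dA n).comp (H n))), ?_, ?_, ?_, ?_⟩
  · intro n
    have hdφ : (dA n).comp (-((H n).comp ((dA n).comp (H n)))) = (dA n).comp (H n) := by
      rw [LinearMap.comp_neg, ← LinearMap.comp_assoc, hPP n, neg_neg]
    have hφd : (-((H (n + 1)).comp ((dA (n + 1)).comp (H (n + 1))))).comp (dA (n + 1))
        = (H (n + 1)).comp (dA (n + 1)) := by
      rw [LinearMap.neg_comp, LinearMap.comp_assoc,
        LinearMap.comp_assoc (dA (n + 1)) (H (n + 1)) (dA (n + 1)),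
        ← LinearMap.comp_assoc, hSS n, neg_neg]
    rw [hdφ, hφd]
    exact hhomotopy n
  · intro n
    have hPS : ((dA n).comp (H n)).comp ((H (n + 1)).comp (dA (n + 1))) = 0 := by
      have h1 : (H (n + 1)).comp (dA (n + 1)) = ((ιinv (n + 1)).comp (ι (n + 1)) - LinearMap.id)
          - (dA n).comp (H n) := by rw [← hT n]; abel
      rw [h1, LinearMap.comp_sub, LinearMap.comp_sub, LinearMap.comp_id, hPe n, hPP n]
      abel
    have hPφ : ((dA n).comp (H n)).comp
        (-((H (n + 1)).comp ((dA (n + 1)).comp (H (n + 1))))) = 0 := by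
      rw [LinearMap.comp_neg,
        ← LinearMap.comp_assoc (H (n + 1)) (dA (n + 1)) (H (n + 1)),
        ← LinearMap.comp_assoc, hPS, LinearMap.zero_comp, neg_zero]
    rw [LinearMap.neg_comp, LinearMap.comp_assoc, hPφ, LinearMap.comp_zero, neg_zero]
  · intro n
    rw [LinearMap.comp_neg, ← LinearMap.comp_assoc, hιH n, LinearMap.zero_comp, neg_zero]
  · intro n
    rw [LinearMap.neg_comp, LinearMap.comp_assoc, LinearMap.comp_assoc, hHinv n,
      LinearMap.comp_zero, LinearMap.comp_zero, neg_zero]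
/-- If `ι : A → A'` is a strong deformation retract of cochain
complexes of `R`-modules, witnessed by the chain map `ιinv` and the degree `-1`
maps `H`, then there exists a homotopy `H'` (with the same `ι`, `ιinv`) which in
addition satisfies the side conditions, i.e. `ι` is a very strong deformation
retract. -/
theorem strong_deformation_retract_to_very_strong {R : Type*} [Ring R]
    (A A' : ℤ → Type*)
    [∀ n, AddCommGroup (A n)] [∀ n, Module R (A n)]
    [∀ n, AddCommGroup (A' n)] [∀ n, Module R (A' n)]
    (dA : ∀ n : ℤ, A n →ₗ[R] A (n + 1)) (dA' : ∀ n : ℤ, A' n →ₗ[R] A' (n + 1))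
    (hdA : ∀ n : ℤ, (dA (n + 1)).comp (dA n) = 0)
    (hdA' : ∀ n : ℤ, (dA' (n + 1)).comp (dA' n) = 0)
    (ι : ∀ n : ℤ, A n →ₗ[R] A' n) (ιinv : ∀ n : ℤ, A' n →ₗ[R] A n)
    (hι : ∀ n : ℤ, (ι (n + 1)).comp (dA n) = (dA' n).comp (ι n))
    (hιinv : ∀ n : ℤ, (ιinv (n + 1)).comp (dA' n) = (dA n).comp (ιinv n))
    (H : ∀ n : ℤ, A (n + 1) →ₗ[R] A n)
    (hretract : ∀ n : ℤ, (ι n).comp (ιinv n) = LinearMap.id)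
    (hhomotopy : ∀ n : ℤ, (ιinv (n + 1)).comp (ι (n + 1)) =
      LinearMap.id + (dA n).comp (H n) + (H (n + 1)).comp (dA (n + 1))) :
    ∃ H' : ∀ n : ℤ, A (n + 1) →ₗ[R] A n,
      (∀ n : ℤ, (ιinv (n + 1)).comp (ι (n + 1)) =
        LinearMap.id + (dA n).comp (H' n) + (H' (n + 1)).comp (dA (n + 1))) ∧
      (∀ n : ℤ, (H' n).comp (H' (n + 1)) = 0) ∧
      (∀ n : ℤ, (ι n).comp (H' n) = 0) ∧
      (∀ n : ℤ, (H' n).comp (ιinv (n + 1)) = 0) := by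
  -- Step 1: replace `H` by `H₁ = (1 - e) ∘ H ∘ (1 - e)` with `e = ιinv ∘ ι`, which
  -- satisfies the annihilation conditions `ι ∘ H₁ = 0` and `H₁ ∘ ιinv = 0`.
  set H₁ : ∀ n : ℤ, A (n + 1) →ₗ[R] A n := fun n =>
    ((LinearMap.id - (ιinv n).comp (ι n)).comp (H n)).comp
      (LinearMap.id - (ιinv (n + 1)).comp (ι (n + 1))) with hH₁
  have hchain : ∀ n : ℤ, ((ιinv (n + 1)).comp (ι (n + 1))).comp (dA n)
      = (dA n).comp ((ιinv n).comp (ι n)) := by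
    intro n
    rw [LinearMap.comp_assoc, hι n, ← LinearMap.comp_assoc, hιinv n, LinearMap.comp_assoc]
  have he_idem : ∀ n : ℤ, ((ιinv n).comp (ι n)).comp ((ιinv n).comp (ι n))
      = (ιinv n).comp (ι n) := by
    intro n
    rw [LinearMap.comp_assoc, ← LinearMap.comp_assoc (ι n) (ιinv n) (ι n), hretract n,
      LinearMap.id_comp]
  have hιH₁ : ∀ n : ℤ, (ι n).comp (H₁ n) = 0 := by
    intro n
    have hι1e : (ι n).comp (LinearMap.id - (ιinv n).comp (ι n)) = 0 := by
      rw [LinearMap.comp_sub, LinearMap.comp_id, ← LinearMap.comp_assoc, hretract n,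
        LinearMap.id_comp, sub_self]
    rw [hH₁]
    rw [← LinearMap.comp_assoc, ← LinearMap.comp_assoc, hι1e, LinearMap.zero_comp,
      LinearMap.zero_comp]
  have hH₁inv : ∀ n : ℤ, (H₁ n).comp (ιinv (n + 1)) = 0 := by
    intro n
    have h1einv : (LinearMap.id - (ιinv (n + 1)).comp (ι (n + 1))).comp (ιinv (n + 1)) = 0 := by
      rw [LinearMap.sub_comp, LinearMap.id_comp, LinearMap.comp_assoc, hretract (n + 1),
        LinearMap.comp_id, sub_self]
    rw [hH₁]
    rw [LinearMap.comp_assoc, h1einv, LinearMap.comp_zero]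
  have hd1e : ∀ n : ℤ, (dA n).comp (LinearMap.id - (ιinv n).comp (ι n))
      = (LinearMap.id - (ιinv (n + 1)).comp (ι (n + 1))).comp (dA n) := by
    intro n
    rw [LinearMap.comp_sub, LinearMap.sub_comp, LinearMap.comp_id, LinearMap.id_comp, hchain n]
  have hhomotopy₁ : ∀ n : ℤ, (ιinv (n + 1)).comp (ι (n + 1)) =
      LinearMap.id + (dA n).comp (H₁ n) + (H₁ (n + 1)).comp (dA (n + 1)) := by
    intro n
    have hT : (dA n).comp (H n) + (H (n + 1)).comp (dA (n + 1))
        = (ιinv (n + 1)).comp (ι (n + 1)) - LinearMap.id := by rw [hhomotopy n]; abel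
    -- expansion of dA ∘ H₁
    have expA : (dA n).comp (H₁ n) =
        (dA n).comp (H n)
        - ((dA n).comp (H n)).comp ((ιinv (n + 1)).comp (ι (n + 1)))
        - (((ιinv (n + 1)).comp (ι (n + 1))).comp ((dA n).comp (H n))
          - (((ιinv (n + 1)).comp (ι (n + 1))).comp ((dA n).comp (H n))).comp
              ((ιinv (n + 1)).comp (ι (n + 1)))) := by
      rw [hH₁]
      rw [← LinearMap.comp_assoc,
        ← LinearMap.comp_assoc (H n) (LinearMap.id - (ιinv n).comp (ι n)) (dA n),
        hd1e n]
      simp only [LinearMap.sub_comp, LinearMap.comp_sub, LinearMap.id_comp,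
        LinearMap.comp_id, LinearMap.comp_assoc]
      abel
    have expB : (H₁ (n + 1)).comp (dA (n + 1)) =
        (H (n + 1)).comp (dA (n + 1))
        - ((H (n + 1)).comp (dA (n + 1))).comp ((ιinv (n + 1)).comp (ι (n + 1)))
        - (((ιinv (n + 1)).comp (ι (n + 1))).comp ((H (n + 1)).comp (dA (n + 1)))
          - (((ιinv (n + 1)).comp (ι (n + 1))).comp ((H (n + 1)).comp (dA (n + 1)))).comp
              ((ιinv (n + 1)).comp (ι (n + 1)))) := by
      rw [hH₁]
      rw [LinearMap.comp_assoc, LinearMap.comp_assoc, ← hd1e (n + 1)]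
      simp only [LinearMap.sub_comp, LinearMap.comp_sub, LinearMap.id_comp,
        LinearMap.comp_id, LinearMap.comp_assoc]
      abel
    -- the cross terms vanish
    have z1 : ((dA n).comp (H n)).comp ((ιinv (n + 1)).comp (ι (n + 1)))
        + ((H (n + 1)).comp (dA (n + 1))).comp ((ιinv (n + 1)).comp (ι (n + 1))) = 0 := by
      rw [← LinearMap.add_comp, hT, LinearMap.sub_comp, LinearMap.id_comp, he_idem (n + 1),
        sub_self]
    have z2 : ((ιinv (n + 1)).comp (ι (n + 1))).comp ((dA n).comp (H n))
        + ((ιinv (n + 1)).comp (ι (n + 1))).comp ((H (n + 1)).comp (dA (n + 1))) = 0 := by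
      rw [← LinearMap.comp_add, hT, LinearMap.comp_sub, LinearMap.comp_id, he_idem (n + 1),
        sub_self]
    have z3 : (((ιinv (n + 1)).comp (ι (n + 1))).comp ((dA n).comp (H n))).comp
          ((ιinv (n + 1)).comp (ι (n + 1)))
        + (((ιinv (n + 1)).comp (ι (n + 1))).comp ((H (n + 1)).comp (dA (n + 1)))).comp
          ((ιinv (n + 1)).comp (ι (n + 1))) = 0 := by
      rw [← LinearMap.add_comp, z2, LinearMap.zero_comp]
    rw [expA, expB]
    have key : LinearMap.id + ((dA n).comp (H n)
        - ((dA n).comp (H n)).comp ((ιinv (n + 1)).comp (ι (n + 1)))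
        - (((ιinv (n + 1)).comp (ι (n + 1))).comp ((dA n).comp (H n))
          - (((ιinv (n + 1)).comp (ι (n + 1))).comp ((dA n).comp (H n))).comp
              ((ιinv (n + 1)).comp (ι (n + 1)))))
        + ((H (n + 1)).comp (dA (n + 1))
        - ((H (n + 1)).comp (dA (n + 1))).comp ((ιinv (n + 1)).comp (ι (n + 1)))
        - (((ιinv (n + 1)).comp (ι (n + 1))).comp ((H (n + 1)).comp (dA (n + 1)))
          - (((ιinv (n + 1)).comp (ι (n + 1))).comp ((H (n + 1)).comp (dA (n + 1)))).comp
              ((ιinv (n + 1)).comp (ι (n + 1)))))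
        = (LinearMap.id + (dA n).comp (H n) + (H (n + 1)).comp (dA (n + 1)))
          - (((dA n).comp (H n)).comp ((ιinv (n + 1)).comp (ι (n + 1)))
            + ((H (n + 1)).comp (dA (n + 1))).comp ((ιinv (n + 1)).comp (ι (n + 1))))
          - (((ιinv (n + 1)).comp (ι (n + 1))).comp ((dA n).comp (H n))
            + ((ιinv (n + 1)).comp (ι (n + 1))).comp ((H (n + 1)).comp (dA (n + 1))))
          + ((((ιinv (n + 1)).comp (ι (n + 1))).comp ((dA n).comp (H n))).comp
              ((ιinv (n + 1)).comp (ι (n + 1)))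
            + (((ιinv (n + 1)).comp (ι (n + 1))).comp ((H (n + 1)).comp (dA (n + 1)))).comp
              ((ιinv (n + 1)).comp (ι (n + 1)))) := by abel
    rw [key, z1, z2, z3, ← hhomotopy n]
    abel
  exact vsdr_aux A A' dA dA' hdA ι ιinv hι hιinv H₁ hιH₁ hH₁inv hhomotopy₁
end

section
/- Fix an integer k ≥ 1. Let d : ℤ^{2k+1} → ℤ^{2k} be the ℤ-linear map given by the 2k × (2k+1) integer matrix whose (a, b)-entry equals 2 if b is odd and a ∈ {b − 1, b}, and equals 0 otherwise (rows indexed 1 ≤ a ≤ 2k, columns 1 ≤ b ≤ 2k+1). Then the kernel of d is a free abelian group of rank k, and the cokernel of d is isomorphic to ℤ^{k−1} ⊕ (ℤ/2)^{k+1}. -/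
/-!
Indexing from `0`, row `a` of `d` has its only nonzero entry `2` in the even column
`2 ⌈a/2⌉`, so `d x = 2 • (x_0, x_2, x_2, x_4, x_4, …, x_{2k-2}, x_{2k-2}, x_{2k})`. This
factors as restriction to the `k + 1` even columns (surjective) followed by `2 •` copying along
the `k + 1` blocks of rows `{0}, {1, 2}, …, {2k-3, 2k-2}, {2k-1}` (injective). Hence the kernel
is the vectors vanishing on the even columns, free on the `k` odd ones. For the cokernel, pick
one row in each block and record `v ∈ ℤ^{2k}` by its values on the chosen rows together with the
`k - 1` differences `v_i - v_{i'}`, `i'` the chosen row of the block of `i`; in these coordinates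
the image of `d` is `0 × 2ℤ^{k+1}`.
-/

/-- The `2k × (2k+1)` integer matrix whose `(a, b)`-entry (in `1`-based indexing,
rows `1 ≤ a ≤ 2k`, columns `1 ≤ b ≤ 2k+1`) equals `2` if the column index `b` is
odd and `a ∈ {b - 1, b}`, and `0` otherwise. -/
def dMinusOneMatrix (k : ℕ) : Matrix (Fin (2 * k)) (Fin (2 * k + 1)) ℤ :=
  fun a b =>
    if (b.1 + 1) % 2 = 1 ∧ (a.1 + 1 = b.1 ∨ a.1 = b.1) then 2 else 0

/-- The `ℤ`-linear map `d : ℤ^{2k+1} → ℤ^{2k}` associated to the matrix. -/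
noncomputable def dMinusOne (k : ℕ) : (Fin (2 * k + 1) → ℤ) →ₗ[ℤ] (Fin (2 * k) → ℤ) :=
  Matrix.toLin' (dMinusOneMatrix k)

open LinearMap Function

section FunLeft

variable (R M : Type*) [Semiring R] [AddCommMonoid M] [Module R M] {ι κ : Type*}

theorem ker_funLeft_eq_iInf_ker_proj (g : κ → ι) :
    ker (funLeft R M g) = ⨅ i ∈ Set.range g, ker (proj i : (ι → M) →ₗ[R] M) := by
  ext x
  simp [funext_iff]

noncomputable def kerFunLeftEquiv (g : κ → ι) :
    ker (funLeft R M g) ≃ₗ[R] (((Set.range g)ᶜ : Set ι) → M) :=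
  open Classical in
  (LinearEquiv.ofEq _ _ (ker_funLeft_eq_iInf_ker_proj R M g)).trans
    (iInfKerProjEquiv R (fun _ => M) disjoint_compl_left (by simp))

theorem nonempty_compl_range_pi_equiv_fin [Fintype ι] [Fintype κ] {e : κ → ι} (he : Injective e)
    {n : ℕ} (hn : Fintype.card ι = Fintype.card κ + n) :
    Nonempty ((((Set.range e)ᶜ : Set ι) → M) ≃ₗ[R] (Fin n → M)) := by
  classical
  have hcard : Fintype.card ((Set.range e)ᶜ : Set ι) = n := by
    rw [Fintype.card_compl_set, Set.card_range_of_injective he]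
    omega
  exact ⟨LinearEquiv.funCongrLeft R M (Fintype.equivFinOfCardEq hcard).symm⟩

end FunLeft

theorem ker_smul_funLeft_eq_bot {R M ι κ : Type*} [CommSemiring R] [AddCommMonoid M] [Module R M]
    [Module.IsTorsionFree R M] {c : R} (hc : IsRegular c) {f : ι → κ} (hf : Surjective f) :
    ker (c • funLeft R M f) = ⊥ :=
  ker_eq_bot_of_injective <|
    (hc.smul_right_injective _).comp (funLeft_injective_of_surjective _ _ f hf)

section Coker

variable {R : Type*} [CommRing R] {ι κ : Type*} {f : ι → κ} {s : κ → ι}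

def smulFunLeftCokerMap (f : ι → κ) (s : κ → ι) (c : R) :
    (ι → R) →ₗ[R] (((Set.range s)ᶜ : Set ι) → R) × (κ → R ⧸ Ideal.span {c}) :=
  (funLeft R R Subtype.val ∘ₗ (LinearMap.id - funLeft R R (s ∘ f))).prod
    ((Ideal.span {c}).mkQ.compLeft κ ∘ₗ funLeft R R s)

theorem smulFunLeftCokerMap_apply (c : R) (v : ι → R) :
    smulFunLeftCokerMap f s c v = (fun i : ((Set.range s)ᶜ : Set ι) => v i - v (s (f i)),
      fun j => Ideal.Quotient.mk _ (v (s j))) := rfl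

theorem smulFunLeftCokerMap_surjective (hs : RightInverse s f) (c : R) :
    Surjective (smulFunLeftCokerMap f s c) := by
  classical
  rintro ⟨z, w⟩
  choose w' hw' using fun j => Ideal.Quotient.mk_surjective (w j)
  let v : ι → R := fun i => w' (f i) + if h : i ∈ (Set.range s)ᶜ then z ⟨i, h⟩ else 0
  have hv : ∀ j, v (s j) = w' j := fun j => by simp [v, hs j]
  refine ⟨v, Prod.ext (funext fun i => ?_) (funext fun j => ?_)⟩
  · have hvi : v i = w' (f i) + z i := by simp only [v, dif_pos i.2]
    show v i - v (s (f i)) = z i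
    rw [hv, hvi, add_sub_cancel_left]
  · show Ideal.Quotient.mk _ (v (s j)) = w j
    rw [hv, hw']

theorem ker_smulFunLeftCokerMap (hs : RightInverse s f) (c : R) :
    ker (smulFunLeftCokerMap f s c) = range (c • funLeft R R f) := by
  apply le_antisymm
  · intro v hv
    obtain ⟨hfree, htors⟩ := Prod.ext_iff.1 hv
    have hconst : ∀ i, v i = v (s (f i)) := by
      intro i
      by_cases hi : i ∈ Set.range s
      · obtain ⟨j, rfl⟩ := hi
        rw [hs j]
      · exact sub_eq_zero.1 (congrFun hfree ⟨i, hi⟩)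
    choose y hy using fun j =>
      Ideal.mem_span_singleton'.1 (Ideal.Quotient.eq_zero_iff_mem.1 (congrFun htors j))
    exact ⟨y, funext fun i => (mul_comm _ _).trans ((hy (f i)).trans (hconst i).symm)⟩
  · rintro _ ⟨y, rfl⟩
    refine Prod.ext (funext fun i => ?_) (funext fun j => ?_)
    · show c * y (f i) - c * y (f (s (f i))) = 0
      rw [hs, sub_self]
    · show Ideal.Quotient.mk _ (c * y (f (s j))) = 0
      exact Ideal.Quotient.eq_zero_iff_mem.2
        (Ideal.mul_mem_right _ _ (Ideal.mem_span_singleton_self c))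

noncomputable def quotRangeSmulFunLeftEquiv (hs : RightInverse s f) (c : R) :
    ((ι → R) ⧸ range (c • funLeft R R f)) ≃ₗ[R]
      (((Set.range s)ᶜ : Set ι) → R) × (κ → R ⧸ Ideal.span {c}) :=
  (Submodule.quotEquivOfEq _ _ (ker_smulFunLeftCokerMap hs c).symm).trans
    ((smulFunLeftCokerMap f s c).quotKerEquivOfSurjective (smulFunLeftCokerMap_surjective hs c))

end Coker

def rowBlock (k : ℕ) : Fin (2 * k) → Fin (k + 1) := fun a => ⟨(a + 1) / 2, by omega⟩

def evenCol (k : ℕ) : Fin (k + 1) → Fin (2 * k + 1) := fun j => ⟨2 * j, by omega⟩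

/-- Picks row `2j - 1` of block `j`; by truncated subtraction this is row `0` for `j = 0`. -/
def rowSection {k : ℕ} (hk : 1 ≤ k) : Fin (k + 1) → Fin (2 * k) := fun j => ⟨2 * j - 1, by omega⟩

theorem rowBlock_rowSection {k : ℕ} (hk : 1 ≤ k) : RightInverse (rowSection hk) (rowBlock k) :=
  fun j => Fin.ext (by simp only [rowBlock, rowSection]; omega)

theorem evenCol_injective (k : ℕ) : Injective (evenCol k) :=
  fun i j h => Fin.ext (by simpa [evenCol] using h)

theorem dMinusOneMatrix_apply (k : ℕ) (a : Fin (2 * k)) (b : Fin (2 * k + 1)) :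
    dMinusOneMatrix k a b = if evenCol k (rowBlock k a) = b then 2 else 0 := by
  simp only [dMinusOneMatrix, evenCol, rowBlock, Fin.ext_iff]
  split_ifs <;> omega

theorem dMinusOne_eq (k : ℕ) :
    dMinusOne k = ((2 : ℤ) • funLeft ℤ ℤ (rowBlock k)) ∘ₗ funLeft ℤ ℤ (evenCol k) := by
  refine LinearMap.ext fun x => funext fun a => ?_
  simp [dMinusOne, Matrix.toLin'_apply, Matrix.mulVec, dotProduct, dMinusOneMatrix_apply]

/-- For `k ≥ 1`, the kernel of `d` is free abelian of rank `k`
and the cokernel of `d` is isomorphic to `ℤ^{k-1} ⊕ (ℤ/2)^{k+1}`. -/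
theorem dMinusOne_ker_coker (k : ℕ) (hk : 1 ≤ k) :
    Nonempty (LinearMap.ker (dMinusOne k) ≃ₗ[ℤ] (Fin k → ℤ)) ∧
    Nonempty (((Fin (2 * k) → ℤ) ⧸ LinearMap.range (dMinusOne k)) ≃ₗ[ℤ]
      ((Fin (k - 1) → ℤ) × (Fin (k + 1) → ZMod 2))) := by
  have hs := rowBlock_rowSection hk
  have hker : ker (dMinusOne k) = ker (funLeft ℤ ℤ (evenCol k)) := by
    rw [dMinusOne_eq, ker_comp_of_ker_eq_bot _
      (ker_smul_funLeft_eq_bot (.of_ne_zero two_ne_zero) hs.surjective)]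
  have hrange : range (dMinusOne k) = range ((2 : ℤ) • funLeft ℤ ℤ (rowBlock k)) := by
    rw [dMinusOne_eq, range_comp_of_range_eq_top _
      (range_eq_top.2 (funLeft_surjective_of_injective _ _ _ (evenCol_injective k)))]
  obtain ⟨eOdd⟩ := nonempty_compl_range_pi_equiv_fin ℤ ℤ (evenCol_injective k) (n := k)
    (by simp only [Fintype.card_fin]; ring)
  obtain ⟨eFree⟩ := nonempty_compl_range_pi_equiv_fin ℤ ℤ hs.injective (n := k - 1)
    (by simp only [Fintype.card_fin]; omega)
  let eZMod : (ℤ ⧸ Ideal.span {(2 : ℤ)}) ≃ₗ[ℤ] ZMod 2 :=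
    (Int.quotientSpanNatEquivZMod 2).toAddEquiv.toIntLinearEquiv
  refine ⟨⟨(LinearEquiv.ofEq _ _ hker).trans ((kerFunLeftEquiv ℤ ℤ _).trans eOdd)⟩, ⟨?_⟩⟩
  exact (Submodule.quotEquivOfEq _ _ hrange).trans ((quotRangeSmulFunLeftEquiv hs 2).trans
    (eFree.prodCongr (LinearEquiv.piCongrRight fun _ => eZMod)))
end
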